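/- Let Γ be a group acting properly discontinuously by isometries on a metric space X₀, let {A_α} be a Γ-invariant ε-separated family of closed subsets of X₀ whose components are permuted by Γ, and suppose the quotient of the union of the A_α by Γ has a path-connected component E. Then E equals the quotient of a single component A_α by its stabilizer Stab_Γ(A_α) in Γ. -/

import Mathlib

noncomputable section
open Metric Set

/-- `γ` restricted to `[a,b]` is a unit-speed (minimizing) geodesic segment. -/
def IsGeodesicOn {X : Type*} [MetricSpace X] (γ : ℝ → X) (a b : ℝ) : Prop :=
  a ≤ b ∧ ∀ s ∈ Set.Icc a b, ∀ t ∈ Set.Icc a b, dist (γ s) (γ t) = |s - t|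

/-- Every pair of points is joined by a geodesic segment. -/
def IsGeodesicSpace (X : Type*) [MetricSpace X] : Prop :=
  ∀ x y : X, ∃ γ : ℝ → X, IsGeodesicOn γ 0 (dist x y) ∧ γ 0 = x ∧ γ (dist x y) = y

/-- Comparison condition defining CAT spaces with model space `M`:
for any geodesic triangle and a comparison triangle in `M`, distances between
points on two sides issuing from a common vertex are bounded by the
corresponding distances in the comparison triangle. -/
def CATWith (M : Type*) [MetricSpace M] (X : Type*) [MetricSpace X] : Prop :=
  IsGeodesicSpace X ∧
  ∀ (p q r : X) (γ δ : ℝ → X),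
    IsGeodesicOn γ 0 (dist p q) → γ 0 = p → γ (dist p q) = q →
    IsGeodesicOn δ 0 (dist p r) → δ 0 = p → δ (dist p r) = r →
    ∀ (p' q' r' : M) (γ' δ' : ℝ → M),
      dist p' q' = dist p q → dist p' r' = dist p r → dist q' r' = dist q r →
      IsGeodesicOn γ' 0 (dist p q) → γ' 0 = p' → γ' (dist p q) = q' →
      IsGeodesicOn δ' 0 (dist p r) → δ' 0 = p' → δ' (dist p r) = r' →
      ∀ s ∈ Set.Icc (0:ℝ) (dist p q), ∀ t ∈ Set.Icc (0:ℝ) (dist p r),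
        dist (γ s) (δ t) ≤ dist (γ' s) (δ' t)

/-- A CAT(-1) space: comparison with the hyperbolic plane of curvature `-1`. -/
def CATMinusOne (X : Type*) [MetricSpace X] : Prop := CATWith UpperHalfPlane X

/-- A CAT(0) space: comparison with the Euclidean plane. -/
def CATZero (X : Type*) [MetricSpace X] : Prop := CATWith (EuclideanSpace ℝ (Fin 2)) X

/-- A subset is (geodesically) convex if it contains every geodesic segment
between any two of its points. -/
def GConvex {X : Type*} [MetricSpace X] (A : Set X) : Prop :=
  ∀ (γ : ℝ → X) (a b : ℝ), IsGeodesicOn γ a b → γ a ∈ A → γ b ∈ A →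
    ∀ t ∈ Set.Icc a b, γ t ∈ A

/-- Distance between two subsets: the infimum of distances between their points. -/
def setDist {X : Type*} [MetricSpace X] (A B : Set X) : ℝ :=
  sInf ((fun p : X × X => dist p.1 p.2) '' A ×ˢ B)

end

/-!
Since `Γ` permutes the pairwise disjoint members of the family, the images `π '' A β` in the
quotient are pairwise equal or disjoint, and the preimage of a union of such images (closed under
having the same image) is a union of members `A γ`. The `ε`-separation makes the family locally
finite, so these unions are closed. Hence the connected set `E` cannot leave the image `π '' A α`
it meets, while `π '' A α` is path-connected and so is absorbed by the maximal `E`. Two points of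
`A α` in one orbit are related by some `g`, and then `g • A α` is a member meeting `A α`, so
`g` stabilizes `A α`.
-/

open Function Metric Set Topology

theorem setDist_le_dist {X : Type*} [MetricSpace X] {A B : Set X} {a b : X}
    (ha : a ∈ A) (hb : b ∈ B) : setDist A B ≤ dist a b :=
  csInf_le ⟨0, by rintro _ ⟨p, -, rfl⟩; exact dist_nonneg⟩ ⟨(a, b), ⟨ha, hb⟩, rfl⟩

section Separated

variable {X ι : Type*} [MetricSpace X] {A : ι → Set X} {ε : ℝ}

theorem eq_of_dist_lt_of_separated (hsep : ∀ α β, α ≠ β → ε ≤ setDist (A α) (A β))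
    {α β : ι} {x y : X} (hx : x ∈ A α) (hy : y ∈ A β) (hxy : dist x y < ε) : α = β := by
  by_contra hne
  linarith [hsep α β hne, setDist_le_dist hx hy]

theorem pairwise_disjoint_of_separated (hε : 0 < ε)
    (hsep : ∀ α β, α ≠ β → ε ≤ setDist (A α) (A β)) : Pairwise (Disjoint on A) :=
  fun α β hne => disjoint_left.mpr fun x hxα hxβ =>
    hne (eq_of_dist_lt_of_separated hsep hxα hxβ (by rwa [dist_self]))

theorem locallyFinite_of_separated (hε : 0 < ε)
    (hsep : ∀ α β, α ≠ β → ε ≤ setDist (A α) (A β)) : LocallyFinite A := by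
  intro x
  refine ⟨ball x (ε / 2), ball_mem_nhds x (by positivity), Subsingleton.finite ?_⟩
  rintro α ⟨y, hyα, hy⟩ β ⟨z, hzβ, hz⟩
  refine eq_of_dist_lt_of_separated hsep hyα hzβ ?_
  calc dist y z ≤ dist y x + dist x z := dist_triangle y x z
    _ < ε / 2 + ε / 2 := add_lt_add (mem_ball.mp hy) (mem_ball'.mp hz)
    _ = ε := add_halves ε

end Separated

theorem IsPathConnected.subset_of_maximal {X : Type*} [TopologicalSpace X] {U E C : Set X}
    (hE : IsPathConnected E)
    (hmax : ∀ E', IsPathConnected E' → E' ⊆ U → E ⊆ E' → E' = E)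
    (hC : IsPathConnected C) (hCU : C ⊆ U) (hEU : E ⊆ U) (hEC : (E ∩ C).Nonempty) :
    C ⊆ E := by
  have hunion := hmax (E ∪ C) (hE.union hC hEC) (union_subset hEU hCU) subset_union_left
  exact hunion ▸ subset_union_right

theorem IsPreconnected.subset_left_of_subset_union_of_isClosed {X : Type*} [TopologicalSpace X]
    {s u v : Set X} (hu : IsClosed u) (hv : IsClosed v) (huv : Disjoint u v)
    (hsuv : s ⊆ u ∪ v) (hsu : (s ∩ u).Nonempty) (hs : IsPreconnected s) : s ⊆ u := by
  refine (isPreconnected_iff_subset_of_disjoint_closed.mp hs u v hu hv hsuv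
    (by rw [huv.inter_eq, inter_empty])).resolve_right fun hsv => ?_
  obtain ⟨x, hxs, hxu⟩ := hsu
  exact disjoint_left.mp huv hxu (hsv hxs)

def IsInvariantFamily (Γ : Type*) {X ι : Type*} [SMul Γ X] (A : ι → Set X) : Prop :=
  ∀ (g : Γ) (α : ι), ∃ β, (fun x => g • x) '' A α = A β

section OrbitQuotient

variable {Γ X ι : Type*} [Group Γ] [MulAction Γ X] {A : ι → Set X}

local notation "π" => Quotient.mk (MulAction.orbitRel Γ X)

theorem mk_eq_mk_iff_exists_smul {x y : X} : π x = π y ↔ ∃ g : Γ, g • y = x :=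
  Quotient.eq.trans MulAction.mem_orbit_iff

theorem smul_image_eq_of_smul_mem (hinv : IsInvariantFamily Γ A)
    (hdisj : Pairwise (Disjoint on A)) {g : Γ} {α β : ι} {x : X} (hx : x ∈ A α)
    (hgx : g • x ∈ A β) : (fun x => g • x) '' A α = A β := by
  obtain ⟨γ, hγ⟩ := hinv g α
  have hgxγ : g • x ∈ A γ := hγ ▸ mem_image_of_mem _ hx
  rw [hγ, hdisj.eq (not_disjoint_iff.mpr ⟨_, hgxγ, hgx⟩)]

theorem mk_eq_mk_iff_of_mem (hinv : IsInvariantFamily Γ A)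
    (hdisj : Pairwise (Disjoint on A)) {α : ι} {x y : X} (hx : x ∈ A α) (hy : y ∈ A α) :
    π x = π y ↔ ∃ g : Γ, (fun z => g • z) '' A α = A α ∧ g • x = y := by
  rw [eq_comm, mk_eq_mk_iff_exists_smul]
  exact exists_congr fun g =>
    ⟨fun hg => ⟨smul_image_eq_of_smul_mem hinv hdisj hx (hg ▸ hy), hg⟩, And.right⟩

theorem image_mk_image_smul (g : Γ) (s : Set X) :
    π '' ((fun x => g • x) '' s) = π '' s := by
  rw [image_image]
  exact image_congr fun z _ => mk_eq_mk_iff_exists_smul.mpr ⟨g, rfl⟩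

theorem image_mk_eq_of_mk_eq (hinv : IsInvariantFamily Γ A)
    (hdisj : Pairwise (Disjoint on A)) {α β : ι} {x y : X} (hx : x ∈ A α) (hy : y ∈ A β)
    (hxy : π x = π y) : π '' A α = π '' A β := by
  obtain ⟨g, rfl⟩ := mk_eq_mk_iff_exists_smul.mp hxy.symm
  rw [← smul_image_eq_of_smul_mem hinv hdisj hx hy, image_mk_image_smul]

theorem preimage_mk_biUnion_image_mk
    (hinv : IsInvariantFamily Γ A) {S : Set ι}
    (hS : ∀ β ∈ S, ∀ γ, π '' A γ = π '' A β → γ ∈ S) :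
    π ⁻¹' (⋃ β ∈ S, π '' A β) = ⋃ β ∈ S, A β := by
  refine Subset.antisymm (fun x hx => ?_) (iUnion₂_subset fun β hβ x hx => ?_)
  · obtain ⟨β, hβ, y, hy, hyx⟩ := mem_iUnion₂.mp hx
    obtain ⟨g, rfl⟩ := mk_eq_mk_iff_exists_smul.mp hyx.symm
    obtain ⟨γ, hγ⟩ := hinv g β
    refine mem_iUnion₂.mpr ⟨γ, hS β hβ γ ?_, hγ ▸ mem_image_of_mem _ hy⟩
    rw [← hγ, image_mk_image_smul]
  · exact mem_iUnion₂.mpr ⟨β, hβ, mem_image_of_mem _ hx⟩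

theorem isClosed_biUnion_image_mk [TopologicalSpace X]
    (hinv : IsInvariantFamily Γ A)
    (hlf : LocallyFinite A) (hcl : ∀ α, IsClosed (A α)) {S : Set ι}
    (hS : ∀ β ∈ S, ∀ γ, π '' A γ = π '' A β → γ ∈ S) :
    IsClosed (⋃ β ∈ S, π '' A β) := by
  have hπ : IsQuotientMap π := isQuotientMap_quotient_mk'
  rw [← hπ.isClosed_preimage, preimage_mk_biUnion_image_mk hinv hS, biUnion_eq_iUnion]
  exact (hlf.comp_injective Subtype.val_injective).isClosed_iUnion fun β => hcl β

theorem IsPreconnected.subset_image_mk [TopologicalSpace X]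
    (hinv : IsInvariantFamily Γ A)
    (hdisj : Pairwise (Disjoint on A)) (hlf : LocallyFinite A) (hcl : ∀ α, IsClosed (A α))
    {E : Set (Quotient (MulAction.orbitRel Γ X))} (hE : IsPreconnected E)
    (hEU : E ⊆ π '' ⋃ β, A β) {α : ι} (hEα : (E ∩ π '' A α).Nonempty) : E ⊆ π '' A α := by
  set S : Set ι := {β | π '' A β = π '' A α}
  have hS : ∀ β ∈ S, ∀ γ, π '' A γ = π '' A β → γ ∈ S := fun β hβ γ hγ => hγ.trans hβ
  have hSc : ∀ β ∈ Sᶜ, ∀ γ, π '' A γ = π '' A β → γ ∈ Sᶜ :=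
    fun β hβ γ hγ hγS => hβ (hγ.symm.trans hγS)
  have hcover : E ⊆ (⋃ β ∈ S, π '' A β) ∪ ⋃ β ∈ Sᶜ, π '' A β := by
    intro z hz
    obtain ⟨x, hx, rfl⟩ := hEU hz
    obtain ⟨β, hxβ⟩ := mem_iUnion.mp hx
    by_cases hβ : β ∈ S
    · exact Or.inl (mem_biUnion hβ (mem_image_of_mem _ hxβ))
    · exact Or.inr (mem_biUnion hβ (mem_image_of_mem _ hxβ))
  have hdisjoint : Disjoint (⋃ β ∈ S, π '' A β) (⋃ β ∈ Sᶜ, π '' A β) := by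
    refine disjoint_iUnion₂_left.mpr fun β hβ => disjoint_iUnion₂_right.mpr fun γ hγ => ?_
    refine disjoint_left.mpr ?_
    rintro _ ⟨x, hx, rfl⟩ ⟨y, hy, hyx⟩
    exact hγ ((image_mk_eq_of_mk_eq hinv hdisj hy hx hyx).trans hβ)
  obtain ⟨z, hzE, hzα⟩ := hEα
  have hEu := hE.subset_left_of_subset_union_of_isClosed
    (isClosed_biUnion_image_mk hinv hlf hcl hS) (isClosed_biUnion_image_mk hinv hlf hcl hSc)
    hdisjoint hcover ⟨z, hzE, mem_biUnion (x := α) rfl hzα⟩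
  exact hEu.trans (iUnion₂_subset fun β hβ => hβ.le)

end OrbitQuotient

theorem statement10_general {Γ : Type*} [Group Γ] {X₀ : Type*} [MetricSpace X₀]
    [MulAction Γ X₀]
    {ι : Type*} (A : ι → Set X₀) (ε : ℝ) (hε : 0 < ε)
    (hcl : ∀ α, IsClosed (A α)) (hpc : ∀ α, IsPathConnected (A α))
    (hinv : ∀ (g : Γ) (α : ι), ∃ β, (fun x => g • x) '' A α = A β)
    (hsep : ∀ α β, α ≠ β → ε ≤ setDist (A α) (A β))
    (q : X₀ → Quotient (MulAction.orbitRel Γ X₀))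
    (hq : q = Quotient.mk (MulAction.orbitRel Γ X₀))
    (E : Set (Quotient (MulAction.orbitRel Γ X₀)))
    (hE1 : E ⊆ q '' ⋃ α, A α) (hE2 : IsPathConnected E)
    (hE3 : ∀ E', IsPathConnected E' → E' ⊆ q '' ⋃ α, A α → E ⊆ E' → E' = E) :
    ∃ α, q '' A α = E ∧
      ∀ x ∈ A α, ∀ y ∈ A α,
        (q x = q y ↔ ∃ g : Γ, (fun z => g • z) '' A α = A α ∧ g • x = y) := by
  subst hq
  have hdisj := pairwise_disjoint_of_separated hε hsep
  obtain ⟨_, he⟩ := hE2.nonempty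
  obtain ⟨x₀, hx₀, rfl⟩ := hE1 he
  obtain ⟨α, hx₀α⟩ := mem_iUnion.mp hx₀
  have hEα : (E ∩ _ '' A α).Nonempty := ⟨_, he, mem_image_of_mem _ hx₀α⟩
  refine ⟨α, Subset.antisymm ?_ ?_, fun x hx y hy => mk_eq_mk_iff_of_mem hinv hdisj hx hy⟩
  · exact hE2.subset_of_maximal hE3 ((hpc α).image continuous_quotient_mk')
      (image_mono (subset_iUnion A α)) hE1 hEα
  · exact hE2.isConnected.isPreconnected.subset_image_mk hinv hdisj
      (locallyFinite_of_separated hε hsep) hcl hE1 hEα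

/-- Let `Γ` act properly discontinuously by isometries on
`X₀` and let `{A α}` be a `Γ`-invariant `ε`-separated family of closed
path-connected subsets. Then every path-component `E` of `(⋃ α, A α)/Γ` is the
quotient of a single member `A α` by its stabilizer in `Γ`. -/
theorem statement10 {Γ : Type*} [Group Γ] {X₀ : Type*} [MetricSpace X₀]
    [MulAction Γ X₀] [ProperlyDiscontinuousSMul Γ X₀]
    (hiso : ∀ g : Γ, Isometry (fun x : X₀ => g • x))
    {ι : Type*} (A : ι → Set X₀) (ε : ℝ) (hε : 0 < ε)
    (hcl : ∀ α, IsClosed (A α)) (hpc : ∀ α, IsPathConnected (A α))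
    (hinv : ∀ (g : Γ) (α : ι), ∃ β, (fun x => g • x) '' A α = A β)
    (hsep : ∀ α β, α ≠ β → ε ≤ setDist (A α) (A β))
    (q : X₀ → Quotient (MulAction.orbitRel Γ X₀))
    (hq : q = Quotient.mk (MulAction.orbitRel Γ X₀))
    (E : Set (Quotient (MulAction.orbitRel Γ X₀)))
    (hE1 : E ⊆ q '' ⋃ α, A α) (hE2 : IsPathConnected E)
    (hE3 : ∀ E', IsPathConnected E' → E' ⊆ q '' ⋃ α, A α → E ⊆ E' → E' = E) :
    ∃ α, q '' A α = E ∧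
      ∀ x ∈ A α, ∀ y ∈ A α,
        (q x = q y ↔ ∃ g : Γ, (fun z => g • z) '' A α = A α ∧ g • x = y) :=
  statement10_general A ε hε hcl hpc hinv hsep q hq E hE1 hE2 hE3
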